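/- arXiv:0909.5245 — 2 statements merged into one kernel-verified Lean document; each statement's English description precedes it below -/
import Mathlib

section
/- Suppose that for the solution ({x_n},{y_n}) there exist constants M1, M3 > 0 and M4 ≥ M2 ≥ 0 such that x_n ≤ M1·y_n + M2 ≤ M3·x_n + M4 for all n ∈ ℕ. Suppose further that A > 0 and that there exists a positive integer η such that for every sequence {c_m}_{m=1}^∞ with c_m ∈ I_β ∪ I_γ for all m, there exist positive integers N1 ≤ N2 ≤ η with Σ_{m=N1}^{N2} c_m ∈ I_B ∪ I_C. Then there exist M > 0 and N ∈ ℕ such that x_n ≤ M and y_n ≤ M for all n > N. -/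
open Finset

/-- The index set of the coefficient function `f` on `{1, …, k}`:
the set of indices `i ∈ {1, …, k}` with `f i > 0`. -/
noncomputable def indexSet (k : ℕ) (f : ℕ → ℝ) : Finset ℕ :=
  (Finset.Icc 1 k).filter fun i => 0 < f i

/-- The iteration condition: for every sequence `c` (indexed by `1, 2, …`)
taking values in `S`, there exist positive integers `N1 ≤ N2 ≤ η` such that
`∑_{m=N1}^{N2} c m ∈ T`. -/
def iterCond (η : ℕ) (S T : Finset ℕ) : Prop :=
  ∀ c : ℕ → ℕ, (∀ m, 1 ≤ m → c m ∈ S) →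
    ∃ N1 N2 : ℕ, 0 < N1 ∧ N1 ≤ N2 ∧ N2 ≤ η ∧ (∑ m ∈ Finset.Icc N1 N2, c m) ∈ T

/-!
Bounding `y` through the two-sided comparison with `x` turns the `x`-equation into two scalar
inequalities with constants `a, c ≥ 0`, `S, b > 0`, where `I = I_β ∪ I_γ`, `T = I_B ∪ I_C` and
`x_{n - d_n} = max_{i ∈ I} x_{n-i}`:

* `A x_n ≤ a + S x_{n - d_n}`, since the denominator is at least `A`;
* `x_n (b x_{n-s} - c) ≤ a + S x_{n - d_n}` for `s ∈ T`, keeping only the lag `s` in the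
  denominator.

Let `r = max 1 ((S + a) / A)` and suppose `x_n` is the first value above a threshold
`T₀ ≥ r^η Ψ`. By the first inequality the walk `n, n - d_n, …` stays above `r^{η-m} Ψ ≥ Ψ` for
`η` steps. The iteration condition, applied to the steps of this walk, gives two of its points
`p` and `p - s` with `s ∈ T`, and the second inequality at `p` gives
`(b Ψ - c) Ψ ≤ a + S x_{p - d_p} ≤ a + S T₀`. This is impossible once `Ψ` is large, because the
left side is quadratic in `Ψ` and `T₀` only linear.
-/

def walk (next : ℕ → ℕ) (n m : ℕ) : ℕ := (fun p => p - next p)^[m] n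

section Walk

variable {next : ℕ → ℕ} {k : ℕ}

theorem walk_succ (n m : ℕ) : walk next n (m + 1) = walk next n m - next (walk next n m) :=
  Function.iterate_succ_apply' _ _ _

theorem walk_le (n m : ℕ) : walk next n m ≤ n := by
  induction m with
  | zero => rfl
  | succ m ih => rw [walk_succ]; omega

theorem le_walk_add_mul (hk : ∀ p, next p ≤ k) (n m : ℕ) : n ≤ walk next n m + k * m := by
  induction m with
  | zero => simp [walk]
  | succ m ih =>
    rw [walk_succ, Nat.mul_succ]
    have := hk (walk next n m)
    omega

theorem walk_add_sum_Icc (hk : ∀ p, next p ≤ k) {n m m' : ℕ} (hmm' : m ≤ m')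
    (hn : k * m' ≤ n) :
    walk next n m' + ∑ j ∈ Icc (m + 1) m', next (walk next n (j - 1)) = walk next n m := by
  induction m', hmm' using Nat.le_induction with
  | base => simp
  | succ m' hmm' ih =>
    rw [Nat.mul_succ] at hn
    rw [sum_Icc_succ_top (by omega), walk_succ, Nat.add_sub_cancel]
    have := le_walk_add_mul hk n m'
    have := hk (walk next n m')
    have := ih (by omega)
    omega

end Walk

section Threshold

variable {u : ℕ → ℝ} {next : ℕ → ℕ} {I T : Finset ℕ} {k η : ℕ} {A a S b c r Ψ : ℝ}

theorem pow_mul_le_of_pow_succ_mul_le (hA : 0 ≤ A) (ha : 0 ≤ a) (hS : 0 < S) (hr : 1 ≤ r)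
    (hrA : S + a ≤ r * A) (hΨ : 1 ≤ Ψ) {n j : ℕ} (hlin : A * u n ≤ a + S * u (n - next n))
    (h : r ^ (j + 1) * Ψ ≤ u n) : r ^ j * Ψ ≤ u (n - next n) := by
  have hone : 1 ≤ r ^ j * Ψ := one_le_mul_of_one_le_of_one_le (one_le_pow₀ hr) hΨ
  refine le_of_mul_le_mul_left ?_ hS
  have := calc
    S * (r ^ j * Ψ) + a ≤ (S + a) * (r ^ j * Ψ) := by nlinarith
    _ ≤ r * A * (r ^ j * Ψ) := by gcongr
    _ = A * (r ^ (j + 1) * Ψ) := by ring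
    _ ≤ A * u n := by gcongr
  linarith

theorem pow_mul_le_walk (hA : 0 ≤ A) (ha : 0 ≤ a) (hS : 0 < S) (hr : 1 ≤ r)
    (hrA : S + a ≤ r * A) (hΨ : 1 ≤ Ψ) (hk : ∀ p, next p ≤ k)
    (hlin : ∀ n, k ≤ n → A * u n ≤ a + S * u (n - next n)) {n : ℕ} :
    ∀ m, k * m ≤ n → ∀ j, r ^ (m + j) * Ψ ≤ u n → r ^ j * Ψ ≤ u (walk next n m)
  | 0, _, j, h => by simpa [walk] using h
  | m + 1, hn, j, h => by
    rw [Nat.mul_succ] at hn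
    have hkw : k ≤ walk next n m := by
      have := le_walk_add_mul hk n m
      omega
    rw [walk_succ]
    refine pow_mul_le_of_pow_succ_mul_le hA ha hS hr hrA hΨ (hlin _ hkw) ?_
    refine pow_mul_le_walk hA ha hS hr hrA hΨ hk hlin m (by omega) (j + 1) ?_
    rwa [← add_assoc, add_right_comm]

theorem le_walk_of_pow_mul_le (hA : 0 ≤ A) (ha : 0 ≤ a) (hS : 0 < S) (hr : 1 ≤ r)
    (hrA : S + a ≤ r * A) (hΨ : 1 ≤ Ψ) (hk : ∀ p, next p ≤ k)
    (hlin : ∀ n, k ≤ n → A * u n ≤ a + S * u (n - next n)) {n : ℕ} (hn : k * η ≤ n)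
    (h : r ^ η * Ψ ≤ u n) {m : ℕ} (hm : m ≤ η) : Ψ ≤ u (walk next n m) := by
  have hrΨ : r ^ (m + (η - m)) * Ψ ≤ u n := by rwa [Nat.add_sub_cancel' hm]
  have hkm : k * m ≤ k * η := Nat.mul_le_mul_left k hm
  refine le_trans ?_ (pow_mul_le_walk hA ha hS hr hrA hΨ hk hlin m (by omega) _ hrΨ)
  exact le_mul_of_one_le_left (by linarith) (one_le_pow₀ hr)

theorem le_of_forall_lt_le_of_iterCond (hIk : I ⊆ Icc 1 k) (hnext : ∀ n, next n ∈ I)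
    (hA : 0 ≤ A) (ha : 0 ≤ a) (hS : 0 < S) (hb : 0 ≤ b)
    (hlin : ∀ n, k ≤ n → A * u n ≤ a + S * u (n - next n))
    (hquad : ∀ n, k ≤ n → ∀ s ∈ T, u n * (b * u (n - s) - c) ≤ a + S * u (n - next n))
    (hiter : iterCond η I T) {T₀ : ℝ} (hr : 1 ≤ r) (hrA : S + a ≤ r * A) (hΨ : 1 ≤ Ψ)
    (hT₀ : r ^ η * Ψ ≤ T₀) (hgap : a + S * T₀ < (b * Ψ - c) * Ψ) {n : ℕ}
    (hn : k * (η + 1) ≤ n) (ih : ∀ m < n, u m ≤ T₀) : u n ≤ T₀ := by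
  by_contra! hlt
  have hnext_le (p : ℕ) : next p ≤ k := (mem_Icc.1 (hIk (hnext p))).2
  have hnext_pos (p : ℕ) : 1 ≤ next p := (mem_Icc.1 (hIk (hnext p))).1
  rw [Nat.mul_succ] at hn
  have hlarge (m : ℕ) (hm : m ≤ η) : Ψ ≤ u (walk next n m) :=
    le_walk_of_pow_mul_le hA ha hS hr hrA hΨ hnext_le hlin (by omega) (hT₀.trans hlt.le) hm
  obtain ⟨N₁, N₂, hN₁, hN₁₂, hN₂, hs⟩ :=
    hiter (fun j => next (walk next n (j - 1))) fun j _ => hnext _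
  have hkN₂ : k * N₂ ≤ k * η := Nat.mul_le_mul_left k hN₂
  have hw := walk_add_sum_Icc hnext_le (n := n) (m := N₁ - 1) (m' := N₂) (by omega) (by omega)
  rw [Nat.sub_add_cancel hN₁] at hw
  have hkp : k ≤ walk next n (N₁ - 1) := by
    have := le_walk_add_mul hnext_le n (N₁ - 1)
    have : k * (N₁ - 1) ≤ k * η := Nat.mul_le_mul_left k (by omega)
    omega
  have hq := hquad _ hkp _ hs
  rw [show walk next n (N₁ - 1) - _ = walk next n N₂ by omega] at hq
  set p := walk next n (N₁ - 1)
  have hprev : u (p - next p) ≤ T₀ := by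
    have := walk_le (next := next) n (N₁ - 1)
    have := hnext_pos p
    have := hnext_le p
    exact ih _ (by omega)
  have hΨp := hlarge (N₁ - 1) (by omega)
  have hΨN₂ := hlarge N₂ hN₂
  have hT₀ : 0 ≤ T₀ := le_trans (by positivity) hT₀
  have hbΨ : 0 < b * Ψ - c := by nlinarith
  have := calc
    (b * Ψ - c) * Ψ ≤ u p * (b * u (walk next n N₂) - c) := by
      rw [mul_comm]
      gcongr
      linarith
    _ ≤ a + S * u (p - next p) := hq
    _ ≤ a + S * T₀ := by gcongr
  linarith

theorem exists_forall_le_of_iterCond (hu : ∀ n, 0 ≤ u n) (hIk : I ⊆ Icc 1 k)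
    (hnext : ∀ n, next n ∈ I) (hA : 0 < A) (ha : 0 ≤ a) (hS : 0 < S) (hb : 0 < b) (hc : 0 ≤ c)
    (hlin : ∀ n, k ≤ n → A * u n ≤ a + S * u (n - next n))
    (hquad : ∀ n, k ≤ n → ∀ s ∈ T, u n * (b * u (n - s) - c) ≤ a + S * u (n - next n))
    (hiter : iterCond η I T) : ∃ M, ∀ n, u n ≤ M := by
  set r := max 1 ((S + a) / A)
  have hr : 1 ≤ r := le_max_left _ _
  have hrA : S + a ≤ r * A := (div_le_iff₀ hA).1 (le_max_right _ _)
  set G := ∑ m ∈ range (k * (η + 1)), u m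
  have hG : 0 ≤ G := sum_nonneg fun m _ => hu m
  -- chosen so that `b Ψ - c = b + a + S r ^ η + S G`
  set Ψ := 1 + (c + a + S * r ^ η + S * G) / b
  have hΨ : 1 ≤ Ψ := le_add_of_nonneg_right (by positivity)
  have hgap : a + S * max (r ^ η * Ψ) G < (b * Ψ - c) * Ψ := by
    have hbΨ : b * Ψ - c = b + a + S * r ^ η + S * G := by
      simp only [Ψ]
      field_simp
      ring
    have hmax : max (r ^ η * Ψ) G ≤ r ^ η * Ψ + G :=
      max_le (le_add_of_nonneg_right hG) (le_add_of_nonneg_left (by positivity))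
    rw [hbΨ]
    nlinarith [mul_le_mul_of_nonneg_left hmax hS.le, mul_le_mul_of_nonneg_left hΨ ha,
      mul_le_mul_of_nonneg_left hΨ (mul_nonneg hS.le hG)]
  refine ⟨max (r ^ η * Ψ) G, fun n => ?_⟩
  induction n using Nat.strong_induction_on with
  | _ n ih =>
    rcases lt_or_ge n (k * (η + 1)) with hn | hn
    · exact (single_le_sum (fun m _ => hu m) (mem_range.2 hn)).trans (le_max_right _ _)
    · exact le_of_forall_lt_le_of_iterCond hIk hnext hA.le ha hS hb.le hlin hquad hiter hr hrA
        hΨ (le_max_left _ _) hgap hn ih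

end Threshold

/-- The common shape of the numerators and denominators of the system. -/
def lagForm (c₀ : ℝ) (f g : ℕ → ℝ) (k : ℕ) (u v : ℕ → ℝ) (n : ℕ) : ℝ :=
  c₀ + ∑ j ∈ Icc 1 k, f j * u (n - j) + ∑ j ∈ Icc 1 k, g j * v (n - j)

theorem indexSet_union_subset_Icc (k : ℕ) (f g : ℕ → ℝ) :
    indexSet k f ∪ indexSet k g ⊆ Icc 1 k :=
  union_subset (filter_subset _ _) (filter_subset _ _)

theorem eq_zero_of_notMem_indexSet {k i : ℕ} {f : ℕ → ℝ} (hf : 0 ≤ f i) (hi : i ∈ Icc 1 k)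
    (hni : i ∉ indexSet k f) : f i = 0 :=
  le_antisymm (not_lt.1 fun h => hni (mem_filter.2 ⟨hi, h⟩)) hf

theorem add_mul_pos_of_mem_indexSet {k i : ℕ} {f g : ℕ → ℝ} {t : ℝ} (hf : ∀ j, 0 ≤ f j)
    (hg : ∀ j, 0 ≤ g j) (ht : 0 < t) (hi : i ∈ indexSet k f ∪ indexSet k g) :
    0 < f i + g i * t := by
  have := hf i
  have := hg i
  rcases mem_union.1 hi with hi | hi
  · have := (mem_filter.1 hi).2
    positivity
  · have := (mem_filter.1 hi).2
    positivity

section LagForm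

variable {k : ℕ} {c₀ : ℝ} {f g : ℕ → ℝ} {u v : ℕ → ℝ} {n : ℕ}

theorem le_lagForm (hf : ∀ j, 0 ≤ f j) (hg : ∀ j, 0 ≤ g j) (hu : ∀ m, 0 ≤ u m)
    (hv : ∀ m, 0 ≤ v m) : c₀ ≤ lagForm c₀ f g k u v n := by
  have := sum_nonneg fun j (_ : j ∈ Icc 1 k) => mul_nonneg (hf j) (hu (n - j))
  have := sum_nonneg fun j (_ : j ∈ Icc 1 k) => mul_nonneg (hg j) (hv (n - j))
  unfold lagForm
  linarith

theorem lagForm_eq_of_indexSet_eq_empty (hf : ∀ j, 0 ≤ f j) (hg : ∀ j, 0 ≤ g j)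
    (h : indexSet k f ∪ indexSet k g = ∅) : lagForm c₀ f g k u v n = c₀ := by
  have hzero (j : ℕ) (hj : j ∈ Icc 1 k) : f j = 0 ∧ g j = 0 :=
    have hj' := not_or.1 (mem_union.not.1 (h ▸ notMem_empty j))
    ⟨eq_zero_of_notMem_indexSet (hf j) hj hj'.1, eq_zero_of_notMem_indexSet (hg j) hj hj'.2⟩
  unfold lagForm
  rw [sum_eq_zero fun j hj => by rw [(hzero j hj).1, zero_mul],
    sum_eq_zero fun j hj => by rw [(hzero j hj).2, zero_mul], add_zero, add_zero]

theorem lagForm_le_of_le {M₁ M₃ M₄ : ℝ} {d : ℕ} (hf : ∀ j, 0 ≤ f j) (hg : ∀ j, 0 ≤ g j)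
    (hM₁ : 0 < M₁) (hM₃ : 0 ≤ M₃) (hvu : ∀ m, M₁ * v m ≤ M₃ * u m + M₄)
    (hd : ∀ j ∈ indexSet k f ∪ indexSet k g, u (n - j) ≤ u (n - d)) :
    lagForm c₀ f g k u v n ≤ (c₀ + (∑ j ∈ Icc 1 k, g j) * (M₄ / M₁)) +
      (∑ j ∈ Icc 1 k, (f j + g j * (M₃ / M₁))) * u (n - d) := by
  have hterm : ∀ j ∈ Icc 1 k, f j * u (n - j) + g j * v (n - j) ≤
      (f j + g j * (M₃ / M₁)) * u (n - d) + g j * (M₄ / M₁) := by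
    intro j hj
    have hv : g j * v (n - j) ≤ g j * (M₃ / M₁) * u (n - j) + g j * (M₄ / M₁) := by
      have := mul_le_mul_of_nonneg_left ((le_div_iff₀' hM₁).2 (hvu (n - j))) (hg j)
      rwa [add_div, mul_div_right_comm, mul_add, ← mul_assoc] at this
    by_cases hj' : j ∈ indexSet k f ∪ indexSet k g
    · have hw : 0 ≤ f j + g j * (M₃ / M₁) := by have := hf j; have := hg j; positivity
      linarith [mul_le_mul_of_nonneg_left (hd j hj') hw]
    · rw [mem_union, not_or] at hj'
      simp [eq_zero_of_notMem_indexSet (hf j) hj hj'.1, eq_zero_of_notMem_indexSet (hg j) hj hj'.2]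
  have := sum_le_sum hterm
  rw [sum_add_distrib, sum_add_distrib, ← sum_mul, ← sum_mul] at this
  unfold lagForm
  linarith

theorem le_lagForm_of_mem {M₁ M₂ b : ℝ} {s : ℕ} (hf : ∀ j, 0 ≤ f j) (hg : ∀ j, 0 ≤ g j)
    (hu : ∀ m, 0 ≤ u m) (hv : ∀ m, 0 ≤ v m) (hM₁ : 0 < M₁) (hM₂ : 0 ≤ M₂)
    (huv : ∀ m, u m ≤ M₁ * v m + M₂) (hs : s ∈ Icc 1 k) (hb : b ≤ f s + g s / M₁) :
    c₀ + b * u (n - s) - (∑ j ∈ Icc 1 k, g j) * (M₂ / M₁) ≤ lagForm c₀ f g k u v n := by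
  have hfs := single_le_sum (fun j _ => mul_nonneg (hf j) (hu (n - j))) hs
  have hgs := single_le_sum (fun j _ => mul_nonneg (hg j) (hv (n - j))) hs
  have hg_sum : g s * (M₂ / M₁) ≤ (∑ j ∈ Icc 1 k, g j) * (M₂ / M₁) :=
    mul_le_mul_of_nonneg_right (single_le_sum (fun j _ => hg j) hs) (by positivity)
  have hvs : g s / M₁ * u (n - s) - g s * (M₂ / M₁) ≤ g s * v (n - s) :=
    calc g s / M₁ * u (n - s) - g s * (M₂ / M₁) = g s * ((u (n - s) - M₂) / M₁) := by ring
      _ ≤ g s * v (n - s) :=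
        mul_le_mul_of_nonneg_left ((div_le_iff₀' hM₁).2 (by linarith [huv (n - s)])) (hg s)
  have hbs := mul_le_mul_of_nonneg_right hb (hu (n - s))
  unfold lagForm
  linarith

end LagForm

theorem mul_le_of_eq_div {x num den L : ℝ} (hx : 0 ≤ x) (hden : 0 < den) (h : x = num / den)
    (hL : L ≤ den) : x * L ≤ num :=
  calc x * L ≤ x * den := mul_le_mul_of_nonneg_left hL hx
    _ = num := by rw [h, div_mul_cancel₀ _ hden.ne']

theorem exists_pos_forall_lt_le_of_le {x y : ℕ → ℝ} {M₁ M₂ M₃ M₄ X : ℝ} {N : ℕ} (hM₁ : 0 < M₁)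
    (hM₃ : 0 ≤ M₃) (hyx : ∀ n, M₁ * y n + M₂ ≤ M₃ * x n + M₄) (hX : ∀ n, N ≤ n → x n ≤ X) :
    ∃ M : ℝ, 0 < M ∧ ∃ N : ℕ, ∀ n, N < n → x n ≤ M ∧ y n ≤ M := by
  refine ⟨max 1 (max X ((M₃ * X + M₄ - M₂) / M₁)), by positivity, N, fun n hn => ?_⟩
  have hxn := hX n hn.le
  refine ⟨le_max_of_le_right (le_max_of_le_left hxn), le_max_of_le_right (le_max_of_le_right ?_)⟩
  rw [le_div_iff₀' hM₁]
  linarith [hyx n, mul_le_mul_of_nonneg_left hxn hM₃]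

theorem exists_forall_le_of_indexSet_nonempty {k η : ℕ} {α A M₁ M₂ M₃ M₄ : ℝ}
    {β γ B C x y : ℕ → ℝ} (hα : 0 ≤ α) (hA : 0 < A) (hβ : ∀ i, 0 ≤ β i) (hγ : ∀ i, 0 ≤ γ i)
    (hB : ∀ j, 0 ≤ B j) (hC : ∀ j, 0 ≤ C j) (hx : ∀ n, 0 ≤ x n) (hy : ∀ n, 0 ≤ y n)
    (hM₁ : 0 < M₁) (hM₂ : 0 ≤ M₂) (hM₃ : 0 < M₃) (hM₄ : 0 ≤ M₄)
    (hxy : ∀ n, x n ≤ M₁ * y n + M₂) (hyx : ∀ n, M₁ * y n + M₂ ≤ M₃ * x n + M₄)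
    (hrec : ∀ n, k ≤ n → ∀ L ≤ lagForm A B C k x y n, x n * L ≤ lagForm α β γ k x y n)
    (hiter : iterCond η (indexSet k β ∪ indexSet k γ) (indexSet k B ∪ indexSet k C))
    (hI : (indexSet k β ∪ indexSet k γ).Nonempty) : ∃ X, ∀ n, x n ≤ X := by
  obtain ⟨i₀, hi₀⟩ := hI
  choose next hnext hmax using fun n =>
    (indexSet k β ∪ indexSet k γ).exists_max_image (fun i => x (n - i)) ⟨i₀, hi₀⟩
  obtain ⟨s₀, hs₀⟩ : (indexSet k B ∪ indexSet k C).Nonempty :=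
    let ⟨_, _, _, _, _, h⟩ := hiter (fun _ => i₀) fun _ _ => hi₀; ⟨_, h⟩
  set b := (indexSet k B ∪ indexSet k C).inf' ⟨s₀, hs₀⟩ fun s => B s + C s / M₁
  have hb : 0 < b := (lt_inf'_iff _).2 fun s hs => by
    rw [div_eq_mul_inv]; exact add_mul_pos_of_mem_indexSet hB hC (inv_pos.2 hM₁) hs
  set S := ∑ i ∈ Icc 1 k, (β i + γ i * (M₃ / M₁))
  have hS : 0 < S :=
    sum_pos' (fun i _ => add_nonneg (hβ i) (mul_nonneg (hγ i) (by positivity)))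
      ⟨i₀, indexSet_union_subset_Icc k β γ hi₀,
        add_mul_pos_of_mem_indexSet hβ hγ (div_pos hM₃ hM₁) hi₀⟩
  set a := α + (∑ i ∈ Icc 1 k, γ i) * (M₄ / M₁)
  have ha : 0 ≤ a := add_nonneg hα (mul_nonneg (sum_nonneg fun i _ => hγ i) (by positivity))
  set c := (∑ j ∈ Icc 1 k, C j) * (M₂ / M₁)
  have hc : 0 ≤ c := mul_nonneg (sum_nonneg fun j _ => hC j) (by positivity)
  have hnum (n : ℕ) : lagForm α β γ k x y n ≤ a + S * x (n - next n) :=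
    lagForm_le_of_le hβ hγ hM₁ hM₃.le (fun m => by linarith [hxy m, hyx m]) (hmax n)
  refine exists_forall_le_of_iterCond hx (indexSet_union_subset_Icc k β γ) hnext hA ha hS hb hc
    (fun n hn => ?_) (fun n hn s hs => (hrec n hn _ ?_).trans (hnum n)) hiter
  · rw [mul_comm]
    exact (hrec n hn A (le_lagForm hB hC hx hy)).trans (hnum n)
  · have := le_lagForm_of_mem (c₀ := A) (n := n) hB hC hx hy hM₁ hM₂ hxy
      (indexSet_union_subset_Icc k B C hs) (inf'_le (fun s => B s + C s / M₁) hs)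
    linarith

theorem stmt_16_general
    (k : ℕ)
    (α A : ℝ) (β γ B C : ℕ → ℝ)
    (hα : 0 ≤ α)
    (hβ : ∀ i, 0 ≤ β i) (hγ : ∀ i, 0 ≤ γ i) (hB : ∀ j, 0 ≤ B j) (hC : ∀ j, 0 ≤ C j)
    (x y : ℕ → ℝ)
    (hxnn : ∀ n, 0 ≤ x n) (hynn : ∀ n, 0 ≤ y n)
    (hxrec : ∀ n, k ≤ n → x n =
      (α + ∑ i ∈ Icc 1 k, β i * x (n - i) + ∑ i ∈ Icc 1 k, γ i * y (n - i)) /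
      (A + ∑ j ∈ Icc 1 k, B j * x (n - j) + ∑ j ∈ Icc 1 k, C j * y (n - j)))
    (M1 M2 M3 M4 : ℝ) (hM1 : 0 < M1) (hM3 : 0 < M3)
    (hM2 : 0 ≤ M2) (hM24 : M2 ≤ M4)
    (hcmp : ∀ n, x n ≤ M1 * y n + M2 ∧ M1 * y n + M2 ≤ M3 * x n + M4)
    (hApos : 0 < A)
    (hη : ∃ η : ℕ, 0 < η ∧
      iterCond η (indexSet k β ∪ indexSet k γ) (indexSet k B ∪ indexSet k C)) :
    ∃ M : ℝ, 0 < M ∧ ∃ N : ℕ, ∀ n, N < n → x n ≤ M ∧ y n ≤ M := by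
  obtain ⟨η, -, hiter⟩ := hη
  have hden (n : ℕ) : A ≤ lagForm A B C k x y n := le_lagForm hB hC hxnn hynn
  have hrec (n : ℕ) (hn : k ≤ n) (L : ℝ) : L ≤ lagForm A B C k x y n →
      x n * L ≤ lagForm α β γ k x y n :=
    mul_le_of_eq_div (hxnn n) (hApos.trans_le (hden n)) (hxrec n hn)
  suffices ∃ X, ∀ n, k ≤ n → x n ≤ X by
    obtain ⟨X, hX⟩ := this
    exact exists_pos_forall_lt_le_of_le hM1 hM3.le (fun n => (hcmp n).2) hX
  rcases (indexSet k β ∪ indexSet k γ).eq_empty_or_nonempty with hI | hI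
  · refine ⟨α / A, fun n hn => (le_div_iff₀ hApos).2 ?_⟩
    simpa [lagForm_eq_of_indexSet_eq_empty hβ hγ hI] using hrec n hn A (hden n)
  · obtain ⟨X, hX⟩ := exists_forall_le_of_indexSet_nonempty hα hApos hβ hγ hB hC hxnn hynn hM1
      hM2 hM3 (hM2.trans hM24) (fun n => (hcmp n).1) (fun n => (hcmp n).2) hrec hiter hI
    exact ⟨X, fun n _ => hX n⟩

theorem stmt_16
    (k : ℕ) (hk : 0 < k)
    (α A p q : ℝ) (β γ B C δ ε D E : ℕ → ℝ)
    (hα : 0 ≤ α) (hA : 0 ≤ A) (hp : 0 ≤ p) (hq : 0 ≤ q)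
    (hβ : ∀ i, 0 ≤ β i) (hγ : ∀ i, 0 ≤ γ i) (hB : ∀ j, 0 ≤ B j) (hC : ∀ j, 0 ≤ C j)
    (hδ : ∀ i, 0 ≤ δ i) (hε : ∀ i, 0 ≤ ε i) (hD : ∀ j, 0 ≤ D j) (hE : ∀ j, 0 ≤ E j)
    (x y : ℕ → ℝ)
    (hxnn : ∀ n, 0 ≤ x n) (hynn : ∀ n, 0 ≤ y n)
    (hxden : ∀ n, k ≤ n →
      0 < A + ∑ j ∈ Icc 1 k, B j * x (n - j) + ∑ j ∈ Icc 1 k, C j * y (n - j))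
    (hyden : ∀ n, k ≤ n →
      0 < q + ∑ j ∈ Icc 1 k, D j * x (n - j) + ∑ j ∈ Icc 1 k, E j * y (n - j))
    (hxrec : ∀ n, k ≤ n → x n =
      (α + ∑ i ∈ Icc 1 k, β i * x (n - i) + ∑ i ∈ Icc 1 k, γ i * y (n - i)) /
      (A + ∑ j ∈ Icc 1 k, B j * x (n - j) + ∑ j ∈ Icc 1 k, C j * y (n - j)))
    (hyrec : ∀ n, k ≤ n → y n =
      (p + ∑ i ∈ Icc 1 k, δ i * x (n - i) + ∑ i ∈ Icc 1 k, ε i * y (n - i)) /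
      (q + ∑ j ∈ Icc 1 k, D j * x (n - j) + ∑ j ∈ Icc 1 k, E j * y (n - j)))
    (M1 M2 M3 M4 : ℝ) (hM1 : 0 < M1) (hM3 : 0 < M3)
    (hM2 : 0 ≤ M2) (hM24 : M2 ≤ M4)
    (hcmp : ∀ n, x n ≤ M1 * y n + M2 ∧ M1 * y n + M2 ≤ M3 * x n + M4)
    (hApos : 0 < A)
    (hη : ∃ η : ℕ, 0 < η ∧
      iterCond η (indexSet k β ∪ indexSet k γ) (indexSet k B ∪ indexSet k C)) :
    ∃ M : ℝ, 0 < M ∧ ∃ N : ℕ, ∀ n, N < n → x n ≤ M ∧ y n ≤ M :=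
  stmt_16_general k α A β γ B C hα hβ hγ hB hC x y hxnn hynn hxrec M1 M2 M3 M4 hM1 hM3 hM2 hM24 hcmp
    hApos hη
end

section
/- Suppose I_δ ⊆ I_β ∪ I_B, I_B ⊆ I_D, I_ε ⊆ I_γ ∪ I_C, and I_C ⊆ I_E. Suppose further that if A > 0 then q > 0, and if p > 0 then α > 0 or A > 0. Then there exist a constant M1 > 0 and a constant M2 ≥ 0 such that y_n ≤ M1·x_n + M2 for all n ∈ ℕ. -/
open Finset

private lemma ratio_aux (a b t s : ℝ) (ha : 0 ≤ a) (hs : 0 ≤ s)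
    (hb : 0 < a → 0 < b) (hbt : b * t ≤ s) : a * t ≤ a / b * s := by
  rcases eq_or_lt_of_le ha with h | h
  · rw [← h]
    simp
  · have hb' := hb h
    have : a * t = a / b * (b * t) := by
      field_simp
    rw [this]
    exact mul_le_mul_of_nonneg_left hbt (div_nonneg ha hb'.le)

theorem stmt_19
    (k : ℕ) (hk : 0 < k)
    (α A p q : ℝ) (β γ B C δ ε D E : ℕ → ℝ)
    (hα : 0 ≤ α) (hA : 0 ≤ A) (hp : 0 ≤ p) (hq : 0 ≤ q)
    (hβ : ∀ i, 0 ≤ β i) (hγ : ∀ i, 0 ≤ γ i) (hB : ∀ j, 0 ≤ B j) (hC : ∀ j, 0 ≤ C j)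
    (hδ : ∀ i, 0 ≤ δ i) (hε : ∀ i, 0 ≤ ε i) (hD : ∀ j, 0 ≤ D j) (hE : ∀ j, 0 ≤ E j)
    (x y : ℕ → ℝ)
    (hxnn : ∀ n, 0 ≤ x n) (hynn : ∀ n, 0 ≤ y n)
    (hxden : ∀ n, k ≤ n →
      0 < A + ∑ j ∈ Icc 1 k, B j * x (n - j) + ∑ j ∈ Icc 1 k, C j * y (n - j))
    (hyden : ∀ n, k ≤ n →
      0 < q + ∑ j ∈ Icc 1 k, D j * x (n - j) + ∑ j ∈ Icc 1 k, E j * y (n - j))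
    (hxrec : ∀ n, k ≤ n → x n =
      (α + ∑ i ∈ Icc 1 k, β i * x (n - i) + ∑ i ∈ Icc 1 k, γ i * y (n - i)) /
      (A + ∑ j ∈ Icc 1 k, B j * x (n - j) + ∑ j ∈ Icc 1 k, C j * y (n - j)))
    (hyrec : ∀ n, k ≤ n → y n =
      (p + ∑ i ∈ Icc 1 k, δ i * x (n - i) + ∑ i ∈ Icc 1 k, ε i * y (n - i)) /
      (q + ∑ j ∈ Icc 1 k, D j * x (n - j) + ∑ j ∈ Icc 1 k, E j * y (n - j)))
    (hsub1 : indexSet k δ ⊆ indexSet k β ∪ indexSet k B)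
    (hsub2 : indexSet k B ⊆ indexSet k D)
    (hsub3 : indexSet k ε ⊆ indexSet k γ ∪ indexSet k C)
    (hsub4 : indexSet k C ⊆ indexSet k E)
    (hAq : 0 < A → 0 < q)
    (hpα : 0 < p → 0 < α ∨ 0 < A) :
    ∃ M1 M2 : ℝ, 0 < M1 ∧ 0 ≤ M2 ∧ ∀ n, y n ≤ M1 * x n + M2 := by
  classical
  set K : ℝ := A / q + (∑ j ∈ Icc 1 k, B j / D j) + ∑ j ∈ Icc 1 k, C j / E j with hKdef
  have hKnn : 0 ≤ K := by
    refine add_nonneg (add_nonneg (div_nonneg hA hq) ?_) ?_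
    · exact sum_nonneg fun j _ => div_nonneg (hB j) (hD j)
    · exact sum_nonneg fun j _ => div_nonneg (hC j) (hE j)
  set C1 : ℝ := p / α + (∑ i ∈ Icc 1 k, δ i / β i) + ∑ i ∈ Icc 1 k, ε i / γ i with hC1def
  set C2 : ℝ := p / q + (∑ i ∈ Icc 1 k, δ i / D i) + ∑ i ∈ Icc 1 k, ε i / E i with hC2def
  have hC1nn : 0 ≤ C1 := by
    refine add_nonneg (add_nonneg (div_nonneg hp hα) ?_) ?_
    · exact sum_nonneg fun i _ => div_nonneg (hδ i) (hβ i)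
    · exact sum_nonneg fun i _ => div_nonneg (hε i) (hγ i)
  have hC2nn : 0 ≤ C2 := by
    refine add_nonneg (add_nonneg (div_nonneg hp hq) ?_) ?_
    · exact sum_nonneg fun i _ => div_nonneg (hδ i) (hD i)
    · exact sum_nonneg fun i _ => div_nonneg (hε i) (hE i)
  have hYnn : 0 ≤ ∑ m ∈ range k, y m := sum_nonneg fun m _ => hynn m
  refine ⟨1 + K * C1, C2 + ∑ m ∈ range k, y m,
    by nlinarith [mul_nonneg hKnn hC1nn], by linarith, ?_⟩
  intro n
  by_cases hn : k ≤ n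
  · -- main case
    set Dx : ℝ := A + ∑ j ∈ Icc 1 k, B j * x (n - j) + ∑ j ∈ Icc 1 k, C j * y (n - j)
      with hDxdef
    set Dy : ℝ := q + ∑ j ∈ Icc 1 k, D j * x (n - j) + ∑ j ∈ Icc 1 k, E j * y (n - j)
      with hDydef
    set Nx : ℝ := α + ∑ i ∈ Icc 1 k, β i * x (n - i) + ∑ i ∈ Icc 1 k, γ i * y (n - i)
      with hNxdef
    set Ny : ℝ := p + ∑ i ∈ Icc 1 k, δ i * x (n - i) + ∑ i ∈ Icc 1 k, ε i * y (n - i)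
      with hNydef
    have hDx : 0 < Dx := hxden n hn
    have hDy : 0 < Dy := hyden n hn
    have hxn : x n * Dx = Nx := by
      rw [hxrec n hn]; exact div_mul_cancel₀ _ (ne_of_gt hDx)
    have hyn : y n * Dy = Ny := by
      rw [hyrec n hn]; exact div_mul_cancel₀ _ (ne_of_gt hDy)
    -- basic term bounds
    have hsumDx : 0 ≤ ∑ j ∈ Icc 1 k, D j * x (n - j) :=
      sum_nonneg fun j _ => mul_nonneg (hD j) (hxnn _)
    have hsumEy : 0 ≤ ∑ j ∈ Icc 1 k, E j * y (n - j) :=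
      sum_nonneg fun j _ => mul_nonneg (hE j) (hynn _)
    have hqDy : q ≤ Dy := by rw [hDydef]; linarith
    have hDjx : ∀ j ∈ Icc 1 k, D j * x (n - j) ≤ Dy := by
      intro j hj
      have h1 : D j * x (n - j) ≤ ∑ j ∈ Icc 1 k, D j * x (n - j) :=
        single_le_sum (fun j _ => mul_nonneg (hD j) (hxnn _)) hj
      rw [hDydef]; linarith
    have hEjy : ∀ j ∈ Icc 1 k, E j * y (n - j) ≤ Dy := by
      intro j hj
      have h1 : E j * y (n - j) ≤ ∑ j ∈ Icc 1 k, E j * y (n - j) :=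
        single_le_sum (fun j _ => mul_nonneg (hE j) (hynn _)) hj
      rw [hDydef]; linarith
    have hsumβx : 0 ≤ ∑ i ∈ Icc 1 k, β i * x (n - i) :=
      sum_nonneg fun i _ => mul_nonneg (hβ i) (hxnn _)
    have hsumγy : 0 ≤ ∑ i ∈ Icc 1 k, γ i * y (n - i) :=
      sum_nonneg fun i _ => mul_nonneg (hγ i) (hynn _)
    have hαNx : α ≤ Nx := by rw [hNxdef]; linarith
    have hβiNx : ∀ i ∈ Icc 1 k, β i * x (n - i) ≤ Nx := by
      intro i hi
      have h1 : β i * x (n - i) ≤ ∑ i ∈ Icc 1 k, β i * x (n - i) :=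
        single_le_sum (fun i _ => mul_nonneg (hβ i) (hxnn _)) hi
      rw [hNxdef]; linarith
    have hγiNx : ∀ i ∈ Icc 1 k, γ i * y (n - i) ≤ Nx := by
      intro i hi
      have h1 : γ i * y (n - i) ≤ ∑ i ∈ Icc 1 k, γ i * y (n - i) :=
        single_le_sum (fun i _ => mul_nonneg (hγ i) (hynn _)) hi
      rw [hNxdef]; linarith
    -- Dx ≤ K * Dy
    have hDxK : Dx ≤ K * Dy := by
      have hA' : A ≤ A / q * Dy := by
        have := ratio_aux A q 1 Dy hA hDy.le hAq (by rw [mul_one]; exact hqDy)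
        linarith [this]
      have hBsum : (∑ j ∈ Icc 1 k, B j * x (n - j)) ≤
          (∑ j ∈ Icc 1 k, B j / D j) * Dy := by
        rw [sum_mul]
        refine sum_le_sum fun j hj => ?_
        refine ratio_aux (B j) (D j) (x (n - j)) Dy (hB j) hDy.le ?_ (hDjx j hj)
        intro hBj
        have : j ∈ indexSet k D := hsub2 (mem_filter.mpr ⟨hj, hBj⟩)
        exact (mem_filter.mp this).2
      have hCsum : (∑ j ∈ Icc 1 k, C j * y (n - j)) ≤
          (∑ j ∈ Icc 1 k, C j / E j) * Dy := by
        rw [sum_mul]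
        refine sum_le_sum fun j hj => ?_
        refine ratio_aux (C j) (E j) (y (n - j)) Dy (hC j) hDy.le ?_ (hEjy j hj)
        intro hCj
        have : j ∈ indexSet k E := hsub4 (mem_filter.mpr ⟨hj, hCj⟩)
        exact (mem_filter.mp this).2
      have hexp : (A / q + (∑ j ∈ Icc 1 k, B j / D j) + ∑ j ∈ Icc 1 k, C j / E j) * Dy
          = A / q * Dy + (∑ j ∈ Icc 1 k, B j / D j) * Dy
            + (∑ j ∈ Icc 1 k, C j / E j) * Dy := by ring
      rw [hDxdef, hKdef, hexp]
      linarith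
    -- useful: Nx ≤ K * (x n * Dy)
    have hNxK : Nx ≤ x n * (K * Dy) :=
      hxn ▸ mul_le_mul_of_nonneg_left hDxK (hxnn n)
    set S1 : ℝ := x n * (K * Dy) with hS1def
    have hS1nn : 0 ≤ S1 :=
      mul_nonneg (hxnn n) (mul_nonneg hKnn hDy.le)
    -- p term
    have hpterm : p ≤ p / α * S1 + p / q * Dy := by
      rcases eq_or_lt_of_le hp with h | h
      · have : 0 ≤ p / α * S1 + p / q * Dy :=
          add_nonneg (mul_nonneg (div_nonneg hp hα) hS1nn)
            (mul_nonneg (div_nonneg hp hq) hDy.le)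
        linarith
      · rcases hpα h with hα' | hA'
        · have h1 : p * 1 ≤ p / α * S1 :=
            ratio_aux p α 1 S1 hp hS1nn (fun _ => hα')
              (by rw [mul_one]; exact le_trans hαNx hNxK)
          have h2 : 0 ≤ p / q * Dy := mul_nonneg (div_nonneg hp hq) hDy.le
          linarith
        · have hq' := hAq hA'
          have h1 : p * 1 ≤ p / q * Dy :=
            ratio_aux p q 1 Dy hp hDy.le (fun _ => hq') (by rw [mul_one]; exact hqDy)
          have h2 : 0 ≤ p / α * S1 := mul_nonneg (div_nonneg hp hα) hS1nn
          linarith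
    -- δ terms
    have hδterm : ∀ i ∈ Icc 1 k,
        δ i * x (n - i) ≤ δ i / β i * S1 + δ i / D i * Dy := by
      intro i hi
      by_cases h0 : 0 < δ i
      · rcases mem_union.mp (hsub1 (mem_filter.mpr ⟨hi, h0⟩)) with hβi | hBi
        · have hβpos : 0 < β i := (mem_filter.mp hβi).2
          have h1 : δ i * x (n - i) ≤ δ i / β i * S1 :=
            ratio_aux _ _ _ _ (hδ i) hS1nn (fun _ => hβpos)
              (le_trans (hβiNx i hi) hNxK)
          have h2 : 0 ≤ δ i / D i * Dy :=
            mul_nonneg (div_nonneg (hδ i) (hD i)) hDy.le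
          linarith
        · have hDpos : 0 < D i := (mem_filter.mp (hsub2 hBi)).2
          have h1 : δ i * x (n - i) ≤ δ i / D i * Dy :=
            ratio_aux _ _ _ _ (hδ i) hDy.le (fun _ => hDpos) (hDjx i hi)
          have h2 : 0 ≤ δ i / β i * S1 :=
            mul_nonneg (div_nonneg (hδ i) (hβ i)) hS1nn
          linarith
      · have hδ0 : δ i = 0 := le_antisymm (not_lt.mp h0) (hδ i)
        have h2 : 0 ≤ δ i / β i * S1 + δ i / D i * Dy := by
          rw [hδ0]; simp
        rw [hδ0]; simpa using h2
    -- ε terms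
    have hεterm : ∀ i ∈ Icc 1 k,
        ε i * y (n - i) ≤ ε i / γ i * S1 + ε i / E i * Dy := by
      intro i hi
      by_cases h0 : 0 < ε i
      · rcases mem_union.mp (hsub3 (mem_filter.mpr ⟨hi, h0⟩)) with hγi | hCi
        · have hγpos : 0 < γ i := (mem_filter.mp hγi).2
          have h1 : ε i * y (n - i) ≤ ε i / γ i * S1 :=
            ratio_aux _ _ _ _ (hε i) hS1nn (fun _ => hγpos)
              (le_trans (hγiNx i hi) hNxK)
          have h2 : 0 ≤ ε i / E i * Dy :=
            mul_nonneg (div_nonneg (hε i) (hE i)) hDy.le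
          linarith
        · have hEpos : 0 < E i := (mem_filter.mp (hsub4 hCi)).2
          have h1 : ε i * y (n - i) ≤ ε i / E i * Dy :=
            ratio_aux _ _ _ _ (hε i) hDy.le (fun _ => hEpos) (hEjy i hi)
          have h2 : 0 ≤ ε i / γ i * S1 :=
            mul_nonneg (div_nonneg (hε i) (hγ i)) hS1nn
          linarith
      · have hε0 : ε i = 0 := le_antisymm (not_lt.mp h0) (hε i)
        have h2 : 0 ≤ ε i / γ i * S1 + ε i / E i * Dy := by
          rw [hε0]; simp
        rw [hε0]; simpa using h2
    -- sum them
    have hδsum : (∑ i ∈ Icc 1 k, δ i * x (n - i)) ≤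
        (∑ i ∈ Icc 1 k, δ i / β i) * S1 + (∑ i ∈ Icc 1 k, δ i / D i) * Dy := by
      rw [sum_mul, sum_mul, ← sum_add_distrib]
      exact sum_le_sum hδterm
    have hεsum : (∑ i ∈ Icc 1 k, ε i * y (n - i)) ≤
        (∑ i ∈ Icc 1 k, ε i / γ i) * S1 + (∑ i ∈ Icc 1 k, ε i / E i) * Dy := by
      rw [sum_mul, sum_mul, ← sum_add_distrib]
      exact sum_le_sum hεterm
    have hNy : Ny ≤ C1 * S1 + C2 * Dy := by
      have hexp : C1 * S1 + C2 * Dy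
          = p / α * S1 + (∑ i ∈ Icc 1 k, δ i / β i) * S1
            + (∑ i ∈ Icc 1 k, ε i / γ i) * S1
            + (p / q * Dy + (∑ i ∈ Icc 1 k, δ i / D i) * Dy
              + (∑ i ∈ Icc 1 k, ε i / E i) * Dy) := by
        rw [hC1def, hC2def]; ring
      rw [hNydef, hexp]
      linarith
    -- conclude
    have hfinal : y n * Dy ≤ ((1 + K * C1) * x n + (C2 + ∑ m ∈ range k, y m)) * Dy := by
      rw [hyn]
      have h1 : 0 ≤ x n * Dy := mul_nonneg (hxnn n) hDy.le
      have h2 : 0 ≤ (∑ m ∈ range k, y m) * Dy := mul_nonneg hYnn hDy.le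
      have h3 : C1 * S1 = K * C1 * x n * Dy := by rw [hS1def]; ring
      have h4 : ((1 + K * C1) * x n + (C2 + ∑ m ∈ range k, y m)) * Dy
          = x n * Dy + K * C1 * x n * Dy + C2 * Dy
            + (∑ m ∈ range k, y m) * Dy := by ring
      rw [h4]
      linarith
    exact le_of_mul_le_mul_right hfinal hDy
  · push_neg at hn
    have h1 : y n ≤ ∑ m ∈ range k, y m :=
      single_le_sum (fun m _ => hynn m) (mem_range.mpr hn)
    have h2 : 0 ≤ (1 + K * C1) * x n :=
      mul_nonneg (by nlinarith [mul_nonneg hKnn hC1nn]) (hxnn n)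
    linarith
end
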